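/- arXiv:math/0307193 — 2 statements merged into one kernel-verified Lean document; each statement's English description precedes it below -/
import Mathlib

section
/- Let S, L, N be matrices in SL(2,C) with N^2 = -I and N L N^{-1} = S L^{-1} S^{-1}. Then the following are equivalent: (i) SL = LS; (ii) N L N^{-1} = L^{-1}; (iii) tr(NL) = 0. -/
open Matrix

lemma adj2 (A : Matrix (Fin 2) (Fin 2) ℂ) : A.adjugate = A.trace • 1 - A := by
  rw [Matrix.adjugate_fin_two, Matrix.trace_fin_two]
  ext i j
  fin_cases i <;> fin_cases j <;>
    simp [Matrix.one_apply]

theorem commuting_criteria (S L N : Matrix (Fin 2) (Fin 2) ℂ)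
    (hS : S.det = 1) (hL : L.det = 1) (hN : N.det = 1)
    (hN2 : N ^ 2 = -1) (hword : N * L * N⁻¹ = S * L⁻¹ * S⁻¹) :
    (S * L = L * S ↔ N * L * N⁻¹ = L⁻¹) ∧
    (N * L * N⁻¹ = L⁻¹ ↔ (N * L).trace = 0) := by
  have hSu : IsUnit S.det := by simp [hS]
  have hLu : IsUnit L.det := by simp [hL]
  have hNu : IsUnit N.det := by simp [hN]
  have hSS : S * S⁻¹ = 1 := Matrix.mul_nonsing_inv S hSu
  have hS'S : S⁻¹ * S = 1 := Matrix.nonsing_inv_mul S hSu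
  have hLL : L * L⁻¹ = 1 := Matrix.mul_nonsing_inv L hLu
  have hL'L : L⁻¹ * L = 1 := Matrix.nonsing_inv_mul L hLu
  have hNN : N * N⁻¹ = 1 := Matrix.mul_nonsing_inv N hNu
  have hNinv : N⁻¹ = -N := Matrix.inv_eq_right_inv (by
    rw [Matrix.mul_neg, ← pow_two, hN2, neg_neg])
  have hNLdet : (N * L).det = 1 := by rw [Matrix.det_mul, hN, hL, one_mul]
  have hNLinv : (N * L)⁻¹ = (N * L).adjugate := by
    rw [Matrix.inv_def, hNLdet, Ring.inverse_one, one_smul]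
  have hNLinv2 : (N * L)⁻¹ = -(L⁻¹ * N) := by
    rw [Matrix.mul_inv_rev, hNinv, Matrix.mul_neg]
  constructor
  · constructor
    · intro h
      have hinv : L⁻¹ * S⁻¹ = S⁻¹ * L⁻¹ := by
        rw [← Matrix.mul_inv_rev, ← Matrix.mul_inv_rev, h]
      rw [hword, mul_assoc, hinv, ← mul_assoc, hSS, one_mul]
    · intro h
      have h2 : S * L⁻¹ * S⁻¹ = L⁻¹ := by rw [← hword]; exact h
      have h3 : S * L⁻¹ = L⁻¹ * S := by
        calc S * L⁻¹ = S * L⁻¹ * S⁻¹ * S := by rw [mul_assoc, hS'S, mul_one]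
        _ = L⁻¹ * S := by rw [h2]
      calc S * L = L * (L⁻¹ * S) * L := by
            rw [← mul_assoc, hLL, one_mul]
        _ = L * (S * L⁻¹) * L := by rw [← h3]
        _ = L * S := by rw [mul_assoc, mul_assoc, hL'L, mul_one]
  · constructor
    · intro h
      have hNL : N * L = L⁻¹ * N := by
        calc N * L = (N * L * N⁻¹) * N := by rw [mul_assoc, Matrix.nonsing_inv_mul N hNu, mul_one]
        _ = L⁻¹ * N := by rw [h]
      have key : (N * L).trace • (1 : Matrix (Fin 2) (Fin 2) ℂ) = 0 := by
        have : (N * L).trace • (1 : Matrix (Fin 2) (Fin 2) ℂ) - N * L = -(N * L) := by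
          rw [← adj2, ← hNLinv, hNLinv2, hNL]
        have := congrArg (· + N * L) this
        simpa using this
      have := congrFun (congrFun key 0) 0
      simpa using this
    · intro h
      have hadj : (N * L)⁻¹ = -(N * L) := by
        rw [hNLinv, adj2, h, zero_smul, zero_sub]
      have hNL : N * L = L⁻¹ * N := by
        have := hadj.symm.trans hNLinv2
        have := neg_injective this
        exact this
      rw [hNL, mul_assoc, hNN, mul_one]
end

section
/- Let γ_α, γ_β, α, β be complex numbers satisfying tanh(γ_α/4)/tanh(γ_β/4) = tan(α/2)/tan(β/2) with tan(α/2) and tan(β/2) nonzero real numbers (the Tangent Rule). Write γ_α = r_α + i·φ_α and γ_β = r_β + i·φ_β with r_α, r_β > 0 real and φ_α, φ_β real. Then sin(φ_α/2)/sinh(r_α/2) = sin(φ_β/2)/sinh(r_β/2). -/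
/-!
For `z = x + y i` one has `tanh z = (sinh 2x + i sin 2y) / (cosh 2x + cos 2y)`, and the
denominator is positive as soon as `x ≠ 0`. The Tangent Rule says that `tanh (γα/4)` and
`tanh (γβ/4)` have a real ratio, i.e. their real and imaginary parts are proportional; the
positive denominators cancel from the cross-multiplied relation, leaving
`sinh (rα/2) sin (φβ/2) = sin (φα/2) sinh (rβ/2)`.
-/

open ComplexConjugate

theorem Real.cosh_add_cos_pos {x : ℝ} (hx : x ≠ 0) (y : ℝ) : 0 < Real.cosh x + Real.cos y := by
  linarith [Real.one_lt_cosh.mpr hx, Real.neg_one_le_cos y]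

namespace Complex

theorem tanh_eq_sinh_add_sin_mul_I_div (z : ℂ) :
    tanh z = (Real.sinh (2 * z.re) + Real.sin (2 * z.im) * I) /
      ((Real.cosh (2 * z.re) + Real.cos (2 * z.im) : ℝ) : ℂ) := by
  have hsinh : 2 * (sinh z * cosh (conj z)) = sinh (z + conj z) + sinh (z - conj z) := by
    rw [sinh_add, sinh_sub]; ring
  have hcosh : 2 * (cosh z * cosh (conj z)) = cosh (z + conj z) + cosh (z - conj z) := by
    rw [cosh_add, cosh_sub]; ring
  rw [add_conj, sub_conj, sinh_mul_I, ← ofReal_sinh, ← ofReal_sin] at hsinh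
  rw [add_conj, sub_conj, cosh_mul_I, ← ofReal_cosh, ← ofReal_cos] at hcosh
  rw [ofReal_add, ← hsinh, ← hcosh, tanh_eq_sinh_div_cosh]
  rcases eq_or_ne (cosh z) 0 with h | h
  · simp [h]
  · rw [mul_div_mul_left _ _ two_ne_zero, mul_div_mul_right _ _ (by rwa [cosh_conj, map_ne_zero])]

theorem tanh_re (z : ℂ) :
    (tanh z).re = Real.sinh (2 * z.re) / (Real.cosh (2 * z.re) + Real.cos (2 * z.im)) := by
  rw [tanh_eq_sinh_add_sin_mul_I_div, div_ofReal_re, add_re, ofReal_re, re_ofReal_mul, I_re,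
    mul_zero, add_zero]

theorem tanh_im (z : ℂ) :
    (tanh z).im = Real.sin (2 * z.im) / (Real.cosh (2 * z.re) + Real.cos (2 * z.im)) := by
  rw [tanh_eq_sinh_add_sin_mul_I_div, div_ofReal_im, add_im, ofReal_im, im_ofReal_mul, I_im,
    mul_one, zero_add]

theorem re_mul_im_eq_im_mul_re_of_div_im_eq_zero {a b : ℂ} (h : (a / b).im = 0) :
    a.re * b.im = a.im * b.re := by
  rcases eq_or_ne b 0 with rfl | hb
  · simp
  · rw [div_im, ← sub_div, div_eq_zero_iff, sub_eq_zero, normSq_eq_zero] at h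
    exact (h.resolve_right hb).symm

theorem sin_div_sinh_eq_of_div_tanh_im_eq_zero {z w : ℂ} (hz : z.re ≠ 0) (hw : w.re ≠ 0)
    (h : (tanh z / tanh w).im = 0) :
    Real.sin (2 * z.im) / Real.sinh (2 * z.re) = Real.sin (2 * w.im) / Real.sinh (2 * w.re) := by
  have hcross := re_mul_im_eq_im_mul_re_of_div_im_eq_zero h
  rw [tanh_re, tanh_re, tanh_im, tanh_im] at hcross
  have hDz := Real.cosh_add_cos_pos (mul_ne_zero two_ne_zero hz) (2 * z.im)
  have hDw := Real.cosh_add_cos_pos (mul_ne_zero two_ne_zero hw) (2 * w.im)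
  rw [div_mul_div_comm, div_mul_div_comm, div_left_inj' (by positivity)] at hcross
  rw [div_eq_div_iff (by simpa using hz) (by simpa using hw)]
  linear_combination -hcross

end Complex

theorem sine_rule_general (α β rα rβ φα φβ : ℝ) (γα γβ : ℂ)
    (hγα : γα = (rα : ℂ) + (φα : ℂ) * Complex.I)
    (hγβ : γβ = (rβ : ℂ) + (φβ : ℂ) * Complex.I)
    (hrα : 0 < rα) (hrβ : 0 < rβ)
    (htan : Complex.tanh (γα/4) / Complex.tanh (γβ/4) =
      (Real.tan (α/2) : ℂ) / (Real.tan (β/2) : ℂ)) :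
    Real.sin (φα/2) / Real.sinh (rα/2) = Real.sin (φβ/2) / Real.sinh (rβ/2) := by
  have hreal : (Complex.tanh (γα/4) / Complex.tanh (γβ/4)).im = 0 := by
    rw [htan, ← Complex.ofReal_div, Complex.ofReal_im]
  have key := Complex.sin_div_sinh_eq_of_div_tanh_im_eq_zero
    (by simp [hγα]; positivity) (by simp [hγβ]; positivity) hreal
  convert key using 3 <;> simp [hγα, hγβ] <;> ring

theorem sine_rule (α β rα rβ φα φβ : ℝ) (γα γβ : ℂ)
    (hγα : γα = (rα : ℂ) + (φα : ℂ) * Complex.I)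
    (hγβ : γβ = (rβ : ℂ) + (φβ : ℂ) * Complex.I)
    (hrα : 0 < rα) (hrβ : 0 < rβ)
    (ha : Real.tan (α/2) ≠ 0) (hb : Real.tan (β/2) ≠ 0)
    (htan : Complex.tanh (γα/4) / Complex.tanh (γβ/4) =
      (Real.tan (α/2) : ℂ) / (Real.tan (β/2) : ℂ)) :
    Real.sin (φα/2) / Real.sinh (rα/2) = Real.sin (φβ/2) / Real.sinh (rβ/2) :=
  sine_rule_general α β rα rβ φα φβ γα γβ hγα hγβ hrα hrβ htan
end
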